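/- arXiv:1011.5279 — 5 statements merged into one kernel-verified Lean document; each statement's English description precedes it below -/
import Mathlib

section
/- Let λ ∈ k with λ(λ³ − 1) ≠ 0 and let A be the algebra on generators x₁, x₂, x₃ with relations λx₁x₂ = x₂x₁, λx₂x₃ = x₃x₂ − x₁², λx₃x₁ = x₁x₃ − x₂². Then the point scheme of A (the vanishing locus in P² determined by the multilinearized relations) is the cubic curve V(λx³ + λy³ + (λ³ − 1)xyz), which is a nodal cubic curve. -/
open MvPolynomial

/-- The point scheme of the algebra with relations `λx₁x₂ = x₂x₁`, `λx₂x₃ = x₃x₂ - x₁²`,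
`λx₃x₁ = x₁x₃ - x₂²` (with `λ(λ³-1) ≠ 0`) is the cubic `V(λx³ + λy³ + (λ³-1)xyz)`:
a nonzero point `(x,y,z)` admits a nonzero partner point on which the multilinearized
relations vanish iff `λx³ + λy³ + (λ³-1)xyz = 0`; moreover this cubic is projectively
equivalent to the nodal cubic `x³ + y³ + xyz`. -/
theorem stmt9 (k : Type*) [Field k] [IsAlgClosed k] (l : k)
    (hl : l * (l ^ 3 - 1) ≠ 0) :
    (∀ x y z : k, ¬(x = 0 ∧ y = 0 ∧ z = 0) →
      ((∃ q : Fin 3 → k, q ≠ 0 ∧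
          l * x * q 1 - y * q 0 = 0 ∧
          l * y * q 2 - z * q 1 + x * q 0 = 0 ∧
          l * z * q 0 - x * q 2 + y * q 1 = 0) ↔
        l * x ^ 3 + l * y ^ 3 + (l ^ 3 - 1) * x * y * z = 0)) ∧
    ∃ (M : Matrix (Fin 3) (Fin 3) k) (c : k), IsUnit M.det ∧ c ≠ 0 ∧
      aeval (fun i : Fin 3 => ∑ j : Fin 3, C (M i j) * X j)
          (C l * X 0 ^ 3 + C l * X 1 ^ 3 + C (l ^ 3 - 1) * X 0 * X 1 * X 2
            : MvPolynomial (Fin 3) k)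
        = C c * (X 0 ^ 3 + X 1 ^ 3 + X 0 * X 1 * X 2) := by
  have h1 : l ≠ 0 := fun h => hl (by simp [h])
  have h2 : l ^ 3 - 1 ≠ 0 := fun h => hl (by simp [h])
  constructor
  · intro x y z _
    set A : Matrix (Fin 3) (Fin 3) k := !![-y, l*x, 0; x, -z, l*y; l*z, y, -x] with hA
    have key := Matrix.exists_mulVec_eq_zero_iff (M := A)
    have hdet : A.det = l * x ^ 3 + l * y ^ 3 + (l ^ 3 - 1) * x * y * z := by
      rw [Matrix.det_fin_three]; simp [hA]; ring
    constructor
    · rintro ⟨q, hq, e1, e2, e3⟩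
      rw [← hdet]
      apply key.mp
      refine ⟨q, hq, ?_⟩
      funext i
      fin_cases i <;>
        simp [hA, Matrix.mulVec, dotProduct, Fin.sum_univ_three] <;>
        [linear_combination e1; linear_combination e2; linear_combination e3]
    · intro hc
      obtain ⟨q, hq, hm⟩ := key.mpr (by rw [hdet]; exact hc)
      refine ⟨q, hq, ?_, ?_, ?_⟩
      · have := congrFun hm 0
        simp [hA, Matrix.mulVec, dotProduct, Fin.sum_univ_three] at this
        linear_combination this
      · have := congrFun hm 1
        simp [hA, Matrix.mulVec, dotProduct, Fin.sum_univ_three] at this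
        linear_combination this
      · have := congrFun hm 2
        simp [hA, Matrix.mulVec, dotProduct, Fin.sum_univ_three] at this
        linear_combination this
  · refine ⟨!![1,0,0;0,1,0;0,0,l/(l^3-1)], l, ?_, h1, ?_⟩
    · rw [Matrix.det_fin_three]
      simp [Matrix.vecHead, Matrix.vecTail]
      exact ⟨h1, h2⟩
    · have hdiv : (l ^ 3 - 1) * (l / (l ^ 3 - 1)) = l := by field_simp
      have hmul : (C (l^3-1) : MvPolynomial (Fin 3) k) * C (l/(l^3-1)) = C l := by
        rw [← C_mul, hdiv]
      have hC : (C (l^3-1) : MvPolynomial (Fin 3) k) = C l ^ 3 - 1 := by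
        rw [map_sub, map_pow, map_one]
      simp only [map_add, map_mul, map_pow, aeval_X, aeval_C, Fin.sum_univ_three]
      simp [Matrix.vecHead, Matrix.vecTail]
      linear_combination (X 0 * X 1 * X 2 : MvPolynomial (Fin 3) k) * hmul
        - (X 0 * X 1 * X 2 * C (l/(l^3-1)) : MvPolynomial (Fin 3) k) * hC
end

section
/- Let S be the k-algebra on generators z₁, z₂, z₃ with relations z₁z₂ + λz₂z₁ = 0, z₂z₃ + λz₃z₂ = 0, z₃z₁ + λz₁z₃ = 0, where λ³ = −1. Then the three elements r₁ = z₃², r₂ = z₂² + z₁z₃, r₃ = z₁² + z₃z₂ form a normalizing sequence in S: each rᵢ is normal modulo the ideal generated by the previous ones (i.e., rᵢS ⊆ Srᵢ + ⟨r₁,...,r_{i−1}⟩ and Srᵢ ⊆ rᵢS + ⟨r₁,...,r_{i−1}⟩). -/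
open FreeAlgebra

/-- The skew-commutation relations `z₁z₂ + λz₂z₁ = 0`, `z₂z₃ + λz₃z₂ = 0`,
`z₃z₁ + λz₁z₃ = 0`. -/
inductive skewRel (k : Type*) [Field k] (l : k) :
    FreeAlgebra k (Fin 3) → FreeAlgebra k (Fin 3) → Prop
  | r1 : skewRel k l (ι k 0 * ι k 1 + l • (ι k 1 * ι k 0)) 0
  | r2 : skewRel k l (ι k 1 * ι k 2 + l • (ι k 2 * ι k 1)) 0
  | r3 : skewRel k l (ι k 2 * ι k 0 + l • (ι k 0 * ι k 2)) 0

/-- If `λ³ = -1`, the elements `r₁ = z₃²`, `r₂ = z₂² + z₁z₃`, `r₃ = z₁² + z₃z₂`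
form a normalizing sequence in the skew polynomial ring `S`. -/
theorem stmt10 (k : Type*) [Field k] (l : k) (hl : l ^ 3 = -1)
    (z₁ z₂ z₃ r₁ r₂ r₃ : RingQuot (skewRel k l))
    (hz₁ : z₁ = RingQuot.mkAlgHom k (skewRel k l) (ι k 0))
    (hz₂ : z₂ = RingQuot.mkAlgHom k (skewRel k l) (ι k 1))
    (hz₃ : z₃ = RingQuot.mkAlgHom k (skewRel k l) (ι k 2))
    (hr₁ : r₁ = z₃ ^ 2) (hr₂ : r₂ = z₂ ^ 2 + z₁ * z₃) (hr₃ : r₃ = z₁ ^ 2 + z₃ * z₂) :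
    (∀ s : RingQuot (skewRel k l),
        (∃ t, r₁ * s = t * r₁) ∧ (∃ t, s * r₁ = r₁ * t)) ∧
    (∀ s : RingQuot (skewRel k l),
        (∃ t, r₂ * s - t * r₂ ∈ TwoSidedIdeal.span {r₁}) ∧
        (∃ t, s * r₂ - r₂ * t ∈ TwoSidedIdeal.span {r₁})) ∧
    (∀ s : RingQuot (skewRel k l),
        (∃ t, r₃ * s - t * r₃ ∈ TwoSidedIdeal.span {r₁, r₂}) ∧
        (∃ t, s * r₃ - r₃ * t ∈ TwoSidedIdeal.span {r₁, r₂})) := by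
  set R := RingQuot (skewRel k l)
  set a : R := RingQuot.mkAlgHom k (skewRel k l) (ι k 0) with ha
  set b : R := RingQuot.mkAlgHom k (skewRel k l) (ι k 1) with hb
  set c : R := RingQuot.mkAlgHom k (skewRel k l) (ι k 2) with hc
  set m : k := -l with hmdef
  have hm1 : m * (m * m) = 1 := by rw [hmdef]; linear_combination -hl
  -- localized smul lemmas (term-mode, to avoid instance mismatch under rw)
  have SMA : ∀ (p : k) (x y : R), (p • x) * y = p • (x * y) := fun p x y =>
    smul_mul_assoc p x y
  have MSC : ∀ (p : k) (x y : R), x * (p • y) = p • (x * y) := fun p x y =>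
    mul_smul_comm p x y
  have SS : ∀ (p q : k) (x : R), p • q • x = (p * q) • x := fun p q x => smul_smul p q x
  have SAdd : ∀ (p : k) (x y : R), p • (x + y) = p • x + p • y := fun p x y => smul_add p x y
  have S1 : ∀ x : R, (1 : k) • x = x := fun x => one_smul k x
  have S0 : ∀ p : k, p • (0 : R) = 0 := fun p => smul_zero p
  have NS : ∀ x : R, m • x = -(l • x) := fun x => by rw [hmdef]; exact neg_smul l x
  -- the base relations in the quotient
  have hrel0 : a * b + l • (b * a) = 0 := by
    have := RingQuot.mkAlgHom_rel k (skewRel.r1 (k := k) (l := l))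
    simpa [map_add, map_mul, map_smul] using this
  have hrel1 : b * c + l • (c * b) = 0 := by
    have := RingQuot.mkAlgHom_rel k (skewRel.r2 (k := k) (l := l))
    simpa [map_add, map_mul, map_smul] using this
  have hrel2 : c * a + l • (a * c) = 0 := by
    have := RingQuot.mkAlgHom_rel k (skewRel.r3 (k := k) (l := l))
    simpa [map_add, map_mul, map_smul] using this
  have hab : a * b = m • (b * a) := by
    rw [NS]; exact eq_neg_of_add_eq_zero_left hrel0
  have hbc : b * c = m • (c * b) := by
    rw [NS]; exact eq_neg_of_add_eq_zero_left hrel1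
  have hca : c * a = m • (a * c) := by
    rw [NS]; exact eq_neg_of_add_eq_zero_left hrel2
  have hba : b * a = (m * m) • (a * b) := by
    rw [hab, SS, show m * m * m = 1 by linear_combination hm1, S1]
  have hcb : c * b = (m * m) • (b * c) := by
    rw [hbc, SS, show m * m * m = 1 by linear_combination hm1, S1]
  have hac : a * c = (m * m) • (c * a) := by
    rw [hca, SS, show m * m * m = 1 by linear_combination hm1, S1]
  -- swapping a square past a generator
  have sw : ∀ (x y : R) (s : k), y * x = s • (x * y) →
      (y * y) * x = (s * s) • (x * (y * y)) := by
    intro x y s h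
    calc (y * y) * x = y * (y * x) := mul_assoc _ _ _
      _ = y * (s • (x * y)) := by rw [h]
      _ = s • ((y * x) * y) := by rw [MSC, ← mul_assoc]
      _ = s • ((s • (x * y)) * y) := by rw [h]
      _ = (s * s) • (x * (y * y)) := by rw [SMA, SS, mul_assoc]
  -- mixed degree-3 identities
  have M2a : (a * c) * a = m • (a * (a * c)) := by
    rw [mul_assoc, hca, MSC]
  have M2b : (a * c) * b = b * (a * c) := by
    calc (a * c) * b = a * (c * b) := mul_assoc _ _ _
      _ = (m * m) • ((a * b) * c) := by rw [hcb, MSC, mul_assoc]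
      _ = ((m * m) * m) • ((b * a) * c) := by rw [hab, SMA, SS]
      _ = b * (a * c) := by
          rw [show (m * m) * m = 1 by linear_combination hm1, S1, mul_assoc]
  have M2c : (a * c) * c = (m * m) • (c * (a * c)) := by
    conv_lhs => rw [hac]
    rw [SMA, mul_assoc]
  have M3a : (c * b) * a = a * (c * b) := by
    calc (c * b) * a = c * (b * a) := mul_assoc _ _ _
      _ = (m * m) • ((c * a) * b) := by rw [hba, MSC, mul_assoc]
      _ = ((m * m) * m) • ((a * c) * b) := by rw [hca, SMA, SS]
      _ = a * (c * b) := by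
          rw [show (m * m) * m = 1 by linear_combination hm1, S1, mul_assoc]
  have M3b : (c * b) * b = (m * m) • (b * (c * b)) := by
    conv_lhs => rw [hcb]
    rw [SMA, mul_assoc]
  have M3c : (c * b) * c = m • (c * (c * b)) := by
    rw [mul_assoc, hbc, MSC]
  -- square identities
  have S1a : (c * c) * a = (m * m) • (a * (c * c)) := sw a c m hca
  have S1b : (c * c) * b = m • (b * (c * c)) := by
    rw [sw b c (m * m) hcb, show (m * m) * (m * m) = m by linear_combination m * hm1]
  have S2a : (b * b) * a = m • (a * (b * b)) := by
    rw [sw a b (m * m) hba, show (m * m) * (m * m) = m by linear_combination m * hm1]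
  have S2c : (b * b) * c = (m * m) • (c * (b * b)) := sw c b m hbc
  have S3b : (a * a) * b = (m * m) • (b * (a * a)) := sw b a m hab
  have S3c : (a * a) * c = m • (c * (a * a)) := by
    rw [sw c a (m * m) hac, show (m * m) * (m * m) = m by linear_combination m * hm1]
  -- quadratic relations are preserved under scaling the generators
  have quad : ∀ (p q : k) (x y : R), x * y + l • (y * x) = 0 →
      (p • x) * (q • y) + l • ((q • y) * (p • x)) = 0 := by
    intro p q x y h
    have h1 : (p • x) * (q • y) = (p * q) • (x * y) := by
      rw [SMA, MSC, SS]
    have h2 : l • ((q • y) * (p • x)) = (p * q) • (l • (y * x)) := by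
      rw [SMA, MSC, SS, SS, SS]
      congr 1; ring
    rw [h1, h2, ← SAdd, h, S0]
  have mkφ : ∀ u : Fin 3 → k, ∃ φ : R →ₐ[k] R,
      φ a = u 0 • a ∧ φ b = u 1 • b ∧ φ c = u 2 • c := by
    intro u
    have hF : ∀ ⦃x y : FreeAlgebra k (Fin 3)⦄, skewRel k l x y →
        (FreeAlgebra.lift k
          (fun i => u i • RingQuot.mkAlgHom k (skewRel k l) (ι k i))) x =
        (FreeAlgebra.lift k
          (fun i => u i • RingQuot.mkAlgHom k (skewRel k l) (ι k i))) y := by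
      intro x y hxy
      cases hxy with
      | r1 =>
        simp only [map_add, map_mul, map_smul, map_zero, FreeAlgebra.lift_ι_apply]
        exact quad _ _ _ _ hrel0
      | r2 =>
        simp only [map_add, map_mul, map_smul, map_zero, FreeAlgebra.lift_ι_apply]
        exact quad _ _ _ _ hrel1
      | r3 =>
        simp only [map_add, map_mul, map_smul, map_zero, FreeAlgebra.lift_ι_apply]
        exact quad _ _ _ _ hrel2
    refine ⟨RingQuot.liftAlgHom k ⟨_, hF⟩, ?_, ?_, ?_⟩
    · rw [ha]
      exact (RingQuot.liftAlgHom_mkAlgHom_apply k _ hF _).trans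
        (FreeAlgebra.lift_ι_apply _ _)
    · rw [hb]
      exact (RingQuot.liftAlgHom_mkAlgHom_apply k _ hF _).trans
        (FreeAlgebra.lift_ι_apply _ _)
    · rw [hc]
      exact (RingQuot.liftAlgHom_mkAlgHom_apply k _ hF _).trans
        (FreeAlgebra.lift_ι_apply _ _)
  -- the key induction lemmas
  have key : ∀ (r : R) (φ : R →ₐ[k] R),
      r * a = φ a * r → r * b = φ b * r → r * c = φ c * r →
      ∀ s : R, r * s = φ s * r := by
    intro r φ h0 h1 h2 s
    obtain ⟨x, rfl⟩ := RingQuot.mkAlgHom_surjective k (skewRel k l) s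
    induction x with
    | grade0 t =>
      rw [AlgHom.commutes, AlgHom.commutes, Algebra.commutes]
    | grade1 i =>
      match i with
      | 0 => exact h0
      | 1 => exact h1
      | 2 => exact h2
    | mul x y ihx ihy =>
      rw [map_mul, map_mul, ← mul_assoc, ihx, mul_assoc, ihy, ← mul_assoc]
    | add x y ihx ihy =>
      rw [map_add, map_add, mul_add, add_mul, ihx, ihy]
  have key' : ∀ (r : R) (φ : R →ₐ[k] R),
      a * r = r * φ a → b * r = r * φ b → c * r = r * φ c →
      ∀ s : R, s * r = r * φ s := by
    intro r φ h0 h1 h2 s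
    obtain ⟨x, rfl⟩ := RingQuot.mkAlgHom_surjective k (skewRel k l) s
    induction x with
    | grade0 t =>
      rw [AlgHom.commutes, AlgHom.commutes, Algebra.commutes]
    | grade1 i =>
      match i with
      | 0 => exact h0
      | 1 => exact h1
      | 2 => exact h2
    | mul x y ihx ihy =>
      rw [map_mul, map_mul, mul_assoc, ihy, ← mul_assoc, ihx, mul_assoc]
    | add x y ihx ihy =>
      rw [map_add, map_add, mul_add, add_mul, ihx, ihy]
  -- reversing a commutation identity
  have flip : ∀ (s t : k) (x r : R), s * t = 1 → r * x = s • (x * r) →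
      x * r = r * (t • x) := by
    intro s t x r hst h
    rw [MSC, h, SS, mul_comm t s, hst, S1]
  subst hz₁ hz₂ hz₃ hr₁ hr₂ hr₃
  have hq1 : c ^ 2 = c * c := pow_two c
  have hq2 : b ^ 2 + a * c = b * b + a * c := by rw [pow_two]
  have hq3 : a ^ 2 + c * b = a * a + c * b := by rw [pow_two]
  rw [hq1, hq2, hq3]
  -- forward generator identities for r₁ = c*c
  have F1a : (c * c) * a = ((m * m) • a) * (c * c) := by rw [SMA]; exact S1a
  have F1b : (c * c) * b = (m • b) * (c * c) := by rw [SMA]; exact S1b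
  have F1c : (c * c) * c = ((1 : k) • c) * (c * c) := by
    rw [S1, mul_assoc]
  -- forward generator identities for r₂ = b*b + a*c
  have F2a : (b * b + a * c) * a = (m • a) * (b * b + a * c) := by
    rw [add_mul, S2a, M2a, SMA, mul_add, SAdd]
  have F2b : (b * b + a * c) * b = ((1 : k) • b) * (b * b + a * c) := by
    rw [S1, add_mul, mul_assoc, M2b, mul_add]
  have F2c : (b * b + a * c) * c = ((m * m) • c) * (b * b + a * c) := by
    rw [add_mul, S2c, M2c, SMA, mul_add, SAdd]
  -- forward generator identities for r₃ = a*a + c*b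
  have F3a : (a * a + c * b) * a = ((1 : k) • a) * (a * a + c * b) := by
    rw [S1, add_mul, mul_assoc, M3a, mul_add]
  have F3b : (a * a + c * b) * b = ((m * m) • b) * (a * a + c * b) := by
    rw [add_mul, S3b, M3b, SMA, mul_add, SAdd]
  have F3c : (a * a + c * b) * c = (m • c) * (a * a + c * b) := by
    rw [add_mul, S3c, M3c, SMA, mul_add, SAdd]
  -- scalar facts
  have e1 : (m * m) * m = 1 := by linear_combination hm1
  have e2 : m * (m * m) = 1 := hm1
  have e3 : (1 : k) * 1 = 1 := one_mul 1
  -- endomorphisms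
  obtain ⟨φ₁, φ₁a, φ₁b, φ₁c⟩ := mkφ ![m * m, m, 1]
  obtain ⟨ψ₁, ψ₁a, ψ₁b, ψ₁c⟩ := mkφ ![m, m * m, 1]
  obtain ⟨φ₂, φ₂a, φ₂b, φ₂c⟩ := mkφ ![m, 1, m * m]
  obtain ⟨ψ₂, ψ₂a, ψ₂b, ψ₂c⟩ := mkφ ![m * m, 1, m]
  obtain ⟨φ₃, φ₃a, φ₃b, φ₃c⟩ := mkφ ![1, m * m, m]
  obtain ⟨χ₃, χ₃a, χ₃b, χ₃c⟩ := mkφ ![1, m, m * m]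
  simp only [Matrix.cons_val_zero, Matrix.cons_val_one, Matrix.head_cons, Matrix.cons_val_two, Matrix.tail_cons] at φ₁a φ₁b φ₁c ψ₁a ψ₁b ψ₁c φ₂a φ₂b φ₂c ψ₂a ψ₂b ψ₂c φ₃a φ₃b φ₃c χ₃a χ₃b χ₃c
  -- main normality statements
  have K1 : ∀ s : R, (c * c) * s = φ₁ s * (c * c) := by
    refine key _ _ ?_ ?_ ?_
    · rw [φ₁a]; exact F1a
    · rw [φ₁b]; exact F1b
    · rw [φ₁c]; exact F1c
  have K1' : ∀ s : R, s * (c * c) = (c * c) * ψ₁ s := by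
    refine key' _ _ ?_ ?_ ?_
    · rw [ψ₁a]; exact flip (m * m) m a (c * c) e1 S1a
    · rw [ψ₁b]; exact flip m (m * m) b (c * c) e2 S1b
    · rw [ψ₁c, S1, mul_assoc]
  have K2 : ∀ s : R, (b * b + a * c) * s = φ₂ s * (b * b + a * c) := by
    refine key _ _ ?_ ?_ ?_
    · rw [φ₂a]; exact F2a
    · rw [φ₂b]; exact F2b
    · rw [φ₂c]; exact F2c
  have K2' : ∀ s : R, s * (b * b + a * c) = (b * b + a * c) * ψ₂ s := by
    refine key' _ _ ?_ ?_ ?_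
    · rw [ψ₂a]
      refine flip m (m * m) a _ e2 ?_
      rw [← SMA]; exact F2a
    · rw [ψ₂b]
      refine flip 1 1 b _ e3 ?_
      rw [← SMA]; exact F2b
    · rw [ψ₂c]
      refine flip (m * m) m c _ e1 ?_
      rw [← SMA]; exact F2c
  have K3 : ∀ s : R, (a * a + c * b) * s = φ₃ s * (a * a + c * b) := by
    refine key _ _ ?_ ?_ ?_
    · rw [φ₃a]; exact F3a
    · rw [φ₃b]; exact F3b
    · rw [φ₃c]; exact F3c
  have K3' : ∀ s : R, s * (a * a + c * b) = (a * a + c * b) * χ₃ s := by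
    refine key' _ _ ?_ ?_ ?_
    · rw [χ₃a]
      refine flip 1 1 a _ e3 ?_
      rw [← SMA]; exact F3a
    · rw [χ₃b]
      refine flip (m * m) m b _ e1 ?_
      rw [← SMA]; exact F3b
    · rw [χ₃c]
      refine flip m (m * m) c _ e2 ?_
      rw [← SMA]; exact F3c
  refine ⟨fun s => ⟨⟨φ₁ s, K1 s⟩, ⟨ψ₁ s, K1' s⟩⟩,
    fun s => ⟨⟨φ₂ s, ?_⟩, ⟨ψ₂ s, ?_⟩⟩,
    fun s => ⟨⟨φ₃ s, ?_⟩, ⟨χ₃ s, ?_⟩⟩⟩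
  · rw [K2 s, sub_self]; exact zero_mem _
  · rw [K2' s, sub_self]; exact zero_mem _
  · rw [K3 s, sub_self]; exact zero_mem _
  · rw [K3' s, sub_self]; exact zero_mem _
end

section
/- Let B = k⟨x₁, x₂⟩/⟨x₁x₂ − x₂x₁ − x₁²⟩ (the Jordan plane). Define φ: B → B by φ(x₁) = x₁, φ(x₂) = x₂ − 2x₁, and δ determined by δ(x₁) = x₁² + 3x₂², δ(x₂) = −2x₁x₂ − 3x₂², extended as a left φ-derivation. Then φ is a well-defined algebra automorphism of B and δ is a well-defined left φ-derivation of B (i.e., both maps respect the defining relation x₁x₂ − x₂x₁ − x₁² = 0). -/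
open FreeAlgebra

/-- The defining relation of the Jordan plane `k⟨x₁,x₂⟩/⟨x₁x₂ - x₂x₁ - x₁²⟩`. -/
inductive jordanRel (k : Type*) [Field k] :
    FreeAlgebra k (Fin 2) → FreeAlgebra k (Fin 2) → Prop
  | rel : jordanRel k (ι k 0 * ι k 1) (ι k 1 * ι k 0 + ι k 0 * ι k 0)

/-- On the Jordan plane, the maps `φ(x₁) = x₁`, `φ(x₂) = x₂ - 2x₁` and
`δ(x₁) = x₁² + 3x₂²`, `δ(x₂) = -2x₁x₂ - 3x₂²` respect the defining relation:
`φ` satisfies `φ(x₁)φ(x₂) - φ(x₂)φ(x₁) - φ(x₁)² = 0`, and `δ` applied to the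
relation via the left `φ`-derivation rule `δ(uv) = φ(u)δ(v) + δ(u)v` gives `0`. -/
theorem stmt11 (k : Type*) [Field k]
    (x₁ x₂ : RingQuot (jordanRel k))
    (hx₁ : x₁ = RingQuot.mkAlgHom k (jordanRel k) (ι k 0))
    (hx₂ : x₂ = RingQuot.mkAlgHom k (jordanRel k) (ι k 1)) :
    (x₁ * (x₂ - 2 • x₁) - (x₂ - 2 • x₁) * x₁ - x₁ ^ 2 = 0) ∧
    (x₁ * (-(2 • (x₁ * x₂)) - 3 • x₂ ^ 2) + (x₁ ^ 2 + 3 • x₂ ^ 2) * x₂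
      - ((x₂ - 2 • x₁) * (x₁ ^ 2 + 3 • x₂ ^ 2) + (-(2 • (x₁ * x₂)) - 3 • x₂ ^ 2) * x₁)
      - (x₁ * (x₁ ^ 2 + 3 • x₂ ^ 2) + (x₁ ^ 2 + 3 • x₂ ^ 2) * x₁) = 0) := by
  have h : x₁ * x₂ = x₂ * x₁ + x₁ ^ 2 := by
    rw [hx₁, hx₂, ← map_mul, ← map_mul, pow_two, ← map_mul, ← map_add]
    exact RingQuot.mkAlgHom_rel k jordanRel.rel
  have h' : ∀ c, x₁ * (x₂ * c) = x₂ * (x₁ * c) + x₁ * (x₁ * c) := by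
    intro c
    rw [← mul_assoc, h, pow_two, add_mul, mul_assoc, mul_assoc]
  have two_s : ∀ y : RingQuot (jordanRel k), (2 : ℕ) • y = 2 * y := fun y => by
    rw [nsmul_eq_mul]; norm_num
  have three_s : ∀ y : RingQuot (jordanRel k), (3 : ℕ) • y = 3 * y := fun y => by
    rw [nsmul_eq_mul]; norm_num
  constructor
  · have : x₁ * (x₂ - 2 • x₁) - (x₂ - 2 • x₁) * x₁ - x₁ ^ 2
        = x₁ * x₂ - x₂ * x₁ - x₁ ^ 2 := by
      simp only [two_s]; noncomm_ring
      simp only [mul_smul_comm, smul_mul_assoc, smul_smul]; abel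
    rw [this, h]; noncomm_ring
  · have e1 : x₁ * (-(2 • (x₁ * x₂)) - 3 • x₂ ^ 2) + (x₁ ^ 2 + 3 • x₂ ^ 2) * x₂
      - ((x₂ - 2 • x₁) * (x₁ ^ 2 + 3 • x₂ ^ 2) + (-(2 • (x₁ * x₂)) - 3 • x₂ ^ 2) * x₁)
      - (x₁ * (x₁ ^ 2 + 3 • x₂ ^ 2) + (x₁ ^ 2 + 3 • x₂ ^ 2) * x₁)
      = 2 * (x₁ * (x₂ * x₁)) - x₁ * (x₁ * x₂) - x₂ * (x₁ * x₁) := by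
      simp only [two_s, three_s]; noncomm_ring
      simp only [mul_smul_comm, smul_mul_assoc, smul_smul, mul_assoc]; abel
    rw [e1, h', h, mul_add x₁ (x₂*x₁) (x₁^2), h']
    noncomm_ring
end

section
/- Let k be a field of characteristic 3 and B = k⟨x, y⟩/⟨x² + y² − xy⟩. Then the map x ↦ r₂, y ↦ r₁ − r₂ defines an isomorphism of graded algebras B ≅ k⟨r₁, r₂⟩/⟨r₁r₂ − r₂r₁ − r₁²⟩ (the Jordan plane). -/
open FreeAlgebra

/-- The defining relation of `B = k⟨x,y⟩/⟨x² + y² - xy⟩`. -/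
inductive bRel (k : Type*) [Field k] :
    FreeAlgebra k (Fin 2) → FreeAlgebra k (Fin 2) → Prop
  | rel : bRel k (ι k 0 * ι k 0 + ι k 1 * ι k 1) (ι k 0 * ι k 1)

/-- The defining relation of the Jordan plane `k⟨r₁,r₂⟩/⟨r₁r₂ - r₂r₁ - r₁²⟩`. -/
inductive jRel (k : Type*) [Field k] :
    FreeAlgebra k (Fin 2) → FreeAlgebra k (Fin 2) → Prop
  | rel : jRel k (ι k 0 * ι k 1) (ι k 1 * ι k 0 + ι k 0 * ι k 0)

section aux
variable (k : Type*) [Field k]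

noncomputable abbrev jX : RingQuot (jRel k) := RingQuot.mkAlgHom k (jRel k) (ι k 0)
noncomputable abbrev jY : RingQuot (jRel k) := RingQuot.mkAlgHom k (jRel k) (ι k 1)
noncomputable abbrev bX : RingQuot (bRel k) := RingQuot.mkAlgHom k (bRel k) (ι k 0)
noncomputable abbrev bY : RingQuot (bRel k) := RingQuot.mkAlgHom k (bRel k) (ι k 1)

lemma jrel : jX k * jY k = jY k * jX k + jX k * jX k := by
  have := RingQuot.mkAlgHom_rel k (jRel.rel (k := k))
  simpa [map_mul, map_add] using this

lemma brel : bX k * bX k + bY k * bY k = bX k * bY k := by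
  have := RingQuot.mkAlgHom_rel k (bRel.rel (k := k))
  simpa [map_mul, map_add] using this

lemma char3J (hchar : (3 : k) = 0) : (3 : RingQuot (jRel k)) = 0 := by
  rw [← map_ofNat (algebraMap k (RingQuot (jRel k))) 3,
    show ((OfNat.ofNat 3 : k)) = 0 from hchar, map_zero]

lemma char3B (hchar : (3 : k) = 0) : (3 : RingQuot (bRel k)) = 0 := by
  rw [← map_ofNat (algebraMap k (RingQuot (bRel k))) 3,
    show ((OfNat.ofNat 3 : k)) = 0 from hchar, map_zero]

lemma key1 {R : Type*} [Ring R] (A B : R) (h : A * B = B * A + A * A)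
    (h3 : (3 : R) = 0) : B * B + (A - B) * (A - B) = B * (A - B) := by
  have e : B * B + (A - B) * (A - B) - B * (A - B)
      = ((B * A + A * A) - A * B) + 3 * (B * B - B * A) := by noncomm_ring
  rw [sub_eq_zero_of_eq h.symm, h3] at e
  simp only [zero_mul, zero_add, add_zero] at e
  exact sub_eq_zero.mp e

lemma key2 {R : Type*} [Ring R] (A B : R) (h : A * A + B * B = A * B)
    (h3 : (3 : R) = 0) : (A + B) * A = A * (A + B) + (A + B) * (A + B) := by
  have e : (A + B) * A - (A * (A + B) + (A + B) * (A + B))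
      = (A * B - (A * A + B * B)) - 3 * (A * B) := by noncomm_ring
  rw [sub_eq_zero_of_eq h.symm, h3] at e
  simp only [zero_mul, zero_sub, sub_zero, neg_zero] at e
  exact sub_eq_zero.mp e

noncomputable def toJ (hchar : (3 : k) = 0) : RingQuot (bRel k) →ₐ[k] RingQuot (jRel k) :=
  RingQuot.liftAlgHom k ⟨FreeAlgebra.lift k ![jY k, jX k - jY k], by
    rintro a b ⟨⟩
    simp only [map_add, map_mul, FreeAlgebra.lift_ι_apply,
      Matrix.cons_val_zero, Matrix.cons_val_one, Matrix.head_cons]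
    exact key1 _ _ (jrel k) (char3J k hchar)⟩

noncomputable def toB (hchar : (3 : k) = 0) : RingQuot (jRel k) →ₐ[k] RingQuot (bRel k) :=
  RingQuot.liftAlgHom k ⟨FreeAlgebra.lift k ![bX k + bY k, bX k], by
    rintro a b ⟨⟩
    simp only [map_add, map_mul, FreeAlgebra.lift_ι_apply,
      Matrix.cons_val_zero, Matrix.cons_val_one, Matrix.head_cons]
    exact key2 _ _ (brel k) (char3B k hchar)⟩

end aux

/-- In characteristic 3, `x ↦ r₂`, `y ↦ r₁ - r₂` defines an algebra isomorphism
from `B = k⟨x,y⟩/⟨x² + y² - xy⟩` onto the Jordan plane. -/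
theorem stmt17 (k : Type*) [Field k] (hchar : (3 : k) = 0) :
    ∃ ψ : RingQuot (bRel k) ≃ₐ[k] RingQuot (jRel k),
      ψ (RingQuot.mkAlgHom k (bRel k) (ι k 0))
          = RingQuot.mkAlgHom k (jRel k) (ι k 1) ∧
      ψ (RingQuot.mkAlgHom k (bRel k) (ι k 1))
          = RingQuot.mkAlgHom k (jRel k) (ι k 0)
              - RingQuot.mkAlgHom k (jRel k) (ι k 1) := by
  refine ⟨AlgEquiv.ofAlgHom (toJ k hchar) (toB k hchar) ?_ ?_, ?_, ?_⟩
  · ext i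
    fin_cases i <;>
      simp [toJ, toB, RingQuot.liftAlgHom_mkAlgHom_apply, FreeAlgebra.lift_ι_apply]
  · ext i
    fin_cases i <;>
      simp [toJ, toB, RingQuot.liftAlgHom_mkAlgHom_apply, FreeAlgebra.lift_ι_apply]
  · simp [toJ, RingQuot.liftAlgHom_mkAlgHom_apply, FreeAlgebra.lift_ι_apply]
  · simp [toJ, RingQuot.liftAlgHom_mkAlgHom_apply, FreeAlgebra.lift_ι_apply]
end

section
/- Let S be the k-algebra on X, Y, Z with relations YX = −XY, YZ = iZY, ZX = iXZ, where i² = −1 and char(k) ≠ 2. Then {XZ, iXY − Z², X² + Y²} is a normalizing sequence in S. -/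
open FreeAlgebra

inductive hRel (k : Type*) [Field k] (i : k) :
    FreeAlgebra k (Fin 3) → FreeAlgebra k (Fin 3) → Prop
  | r1 : hRel k i (ι k 1 * ι k 0) (-(ι k 0 * ι k 1))
  | r2 : hRel k i (ι k 1 * ι k 2) (i • (ι k 2 * ι k 1))
  | r3 : hRel k i (ι k 2 * ι k 0) (i • (ι k 0 * ι k 2))

section aux
variable {k : Type*} [Field k] {i : k}

/-- The algebra endomorphism of `S` scaling each generator `j` by `c j`. -/
noncomputable def scalHom (c : Fin 3 → k) : RingQuot (hRel k i) →ₐ[k] RingQuot (hRel k i) :=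
  RingQuot.liftAlgHom k ⟨(RingQuot.mkAlgHom k (hRel k i)).comp
      (FreeAlgebra.lift k fun j => c j • ι k j), by
    have e1 : RingQuot.mkAlgHom k (hRel k i) (ι k 1) * RingQuot.mkAlgHom k (hRel k i) (ι k 0) =
        -(RingQuot.mkAlgHom k (hRel k i) (ι k 0) * RingQuot.mkAlgHom k (hRel k i) (ι k 1)) := by
      simpa using RingQuot.mkAlgHom_rel k (hRel.r1 (k := k) (i := i))
    have e2 : RingQuot.mkAlgHom k (hRel k i) (ι k 1) * RingQuot.mkAlgHom k (hRel k i) (ι k 2) =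
        i • (RingQuot.mkAlgHom k (hRel k i) (ι k 2) * RingQuot.mkAlgHom k (hRel k i) (ι k 1)) := by
      simpa using RingQuot.mkAlgHom_rel k (hRel.r2 (k := k) (i := i))
    have e3 : RingQuot.mkAlgHom k (hRel k i) (ι k 2) * RingQuot.mkAlgHom k (hRel k i) (ι k 0) =
        i • (RingQuot.mkAlgHom k (hRel k i) (ι k 0) * RingQuot.mkAlgHom k (hRel k i) (ι k 2)) := by
      simpa using RingQuot.mkAlgHom_rel k (hRel.r3 (k := k) (i := i))
    rintro x y (h | h | h) <;>
      simp only [AlgHom.comp_apply, map_mul, map_neg, map_smul, FreeAlgebra.lift_ι_apply,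
        smul_mul_assoc, mul_smul_comm, smul_smul, smul_neg, neg_smul]
    · rw [e1, smul_neg, mul_comm (c 0) (c 1)]
    · rw [e2, smul_smul]; congr 1; ring
    · rw [e3, smul_smul]; congr 1; ring⟩

theorem scalHom_mk (c : Fin 3 → k) (j : Fin 3) :
    scalHom (i := i) c (RingQuot.mkAlgHom k (hRel k i) (ι k j)) =
      c j • RingQuot.mkAlgHom k (hRel k i) (ι k j) := by
  rw [scalHom, RingQuot.liftAlgHom_mkAlgHom_apply]
  simp

theorem key_right (r : RingQuot (hRel k i)) (φ : RingQuot (hRel k i) →ₐ[k] RingQuot (hRel k i))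
    (h0 : r * RingQuot.mkAlgHom k (hRel k i) (ι k 0) =
      φ (RingQuot.mkAlgHom k (hRel k i) (ι k 0)) * r)
    (h1 : r * RingQuot.mkAlgHom k (hRel k i) (ι k 1) =
      φ (RingQuot.mkAlgHom k (hRel k i) (ι k 1)) * r)
    (h2 : r * RingQuot.mkAlgHom k (hRel k i) (ι k 2) =
      φ (RingQuot.mkAlgHom k (hRel k i) (ι k 2)) * r) :
    ∀ s, r * s = φ s * r := by
  intro s
  obtain ⟨a, rfl⟩ := RingQuot.mkAlgHom_surjective k (hRel k i) s
  induction a with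
  | grade0 c => simp [Algebra.commutes]
  | grade1 j => fin_cases j; exacts [h0, h1, h2]
  | mul a b ha hb =>
      rw [map_mul, map_mul, ← mul_assoc, ha, mul_assoc, hb, ← mul_assoc]
  | add a b ha hb => rw [map_add, map_add, mul_add, ha, hb, add_mul]

theorem key_left (r : RingQuot (hRel k i)) (φ : RingQuot (hRel k i) →ₐ[k] RingQuot (hRel k i))
    (h0 : RingQuot.mkAlgHom k (hRel k i) (ι k 0) * r =
      r * φ (RingQuot.mkAlgHom k (hRel k i) (ι k 0)))
    (h1 : RingQuot.mkAlgHom k (hRel k i) (ι k 1) * r =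
      r * φ (RingQuot.mkAlgHom k (hRel k i) (ι k 1)))
    (h2 : RingQuot.mkAlgHom k (hRel k i) (ι k 2) * r =
      r * φ (RingQuot.mkAlgHom k (hRel k i) (ι k 2))) :
    ∀ s, s * r = r * φ s := by
  intro s
  obtain ⟨a, rfl⟩ := RingQuot.mkAlgHom_surjective k (hRel k i) s
  induction a with
  | grade0 c => simp [Algebra.commutes]
  | grade1 j => fin_cases j; exacts [h0, h1, h2]
  | mul a b ha hb =>
      rw [map_mul, map_mul, mul_assoc, hb, ← mul_assoc, ha, mul_assoc]
  | add a b ha hb => rw [map_add, map_add, add_mul, ha, hb, mul_add]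

end aux

/-- If `char k ≠ 2` and `i² = -1`, then `{XZ, iXY - Z², X² + Y²}` is a normalizing
sequence in the skew polynomial ring `S` with relations `YX = -XY`, `YZ = iZY`,
`ZX = iXZ`. -/
theorem stmt18 (k : Type*) [Field k] [IsAlgClosed k] (hchar : (2 : k) ≠ 0)
    (i : k) (hi : i ^ 2 = -1)
    (X Y Z r₁ r₂ r₃ : RingQuot (hRel k i))
    (hX : X = RingQuot.mkAlgHom k (hRel k i) (ι k 0))
    (hY : Y = RingQuot.mkAlgHom k (hRel k i) (ι k 1))
    (hZ : Z = RingQuot.mkAlgHom k (hRel k i) (ι k 2))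
    (hr₁ : r₁ = X * Z) (hr₂ : r₂ = i • (X * Y) - Z ^ 2) (hr₃ : r₃ = X ^ 2 + Y ^ 2) :
    (∀ s : RingQuot (hRel k i),
        (∃ t, r₁ * s = t * r₁) ∧ (∃ t, s * r₁ = r₁ * t)) ∧
    (∀ s : RingQuot (hRel k i),
        (∃ t, r₂ * s - t * r₂ ∈ TwoSidedIdeal.span {r₁}) ∧
        (∃ t, s * r₂ - r₂ * t ∈ TwoSidedIdeal.span {r₁})) ∧
    (∀ s : RingQuot (hRel k i),
        (∃ t, r₃ * s - t * r₃ ∈ TwoSidedIdeal.span {r₁, r₂}) ∧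
        (∃ t, s * r₃ - r₃ * t ∈ TwoSidedIdeal.span {r₁, r₂})) := by
  have hii : i * i = -1 := by rw [← sq]; exact hi
  have hYX : Y * X = (-1 : k) • (X * Y) := by
    rw [hX, hY, ← map_mul, RingQuot.mkAlgHom_rel k hRel.r1, map_neg, map_mul]
    module
  have hYZ : Y * Z = i • (Z * Y) := by
    rw [hY, hZ, ← map_mul, ← map_mul, ← map_smul]
    exact RingQuot.mkAlgHom_rel k hRel.r2
  have hZX : Z * X = i • (X * Z) := by
    rw [hX, hZ, ← map_mul, ← map_mul, ← map_smul]
    exact RingQuot.mkAlgHom_rel k hRel.r3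
  have hZY : Z * Y = (-i) • (Y * Z) := by
    rw [hYZ, smul_smul, neg_mul, hii, neg_neg, one_smul]
  have hYX' : ∀ t, Y * (X * t) = (-1 : k) • (X * (Y * t)) := fun t => by
    rw [← mul_assoc, hYX, smul_mul_assoc, mul_assoc]
  have hZY' : ∀ t, Z * (Y * t) = (-i) • (Y * (Z * t)) := fun t => by
    rw [← mul_assoc, hZY, smul_mul_assoc, mul_assoc]
  have hZX' : ∀ t, Z * (X * t) = i • (X * (Z * t)) := fun t => by
    rw [← mul_assoc, hZX, smul_mul_assoc, mul_assoc]
  refine ⟨?_, ?_, ?_⟩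
  · -- r₁ = XZ
    intro s
    constructor
    · refine ⟨scalHom ![i, i, -i] s, key_right r₁ _ ?_ ?_ ?_ s⟩ <;>
        rw [scalHom_mk] <;> simp only [← hX, ← hY, ← hZ] <;>
        simp only [hr₁, Matrix.cons_val_zero, Matrix.cons_val_one, Matrix.head_cons,
          Matrix.cons_val_two, Matrix.tail_cons] <;>
        simp [mul_assoc, hYX, hZY, hZX, hYX', hZY', hZX', smul_mul_assoc, mul_smul_comm,
          smul_smul, hii, neg_smul] <;>
        try module
    · refine ⟨scalHom ![-i, -i, i] s, key_left r₁ _ ?_ ?_ ?_ s⟩ <;>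
        rw [scalHom_mk] <;> simp only [← hX, ← hY, ← hZ] <;>
        simp only [hr₁, Matrix.cons_val_zero, Matrix.cons_val_one, Matrix.head_cons,
          Matrix.cons_val_two, Matrix.tail_cons] <;>
        simp [mul_assoc, hYX, hZY, hZX, hYX', hZY', hZX', smul_mul_assoc, mul_smul_comm,
          smul_smul, hii, neg_smul] <;>
        try module
  · -- r₂ = i•XY - Z²
    have main : ∀ s, r₂ * s = scalHom ![-1, -1, 1] s * r₂ := by
      refine key_right r₂ _ ?_ ?_ ?_ <;>
        rw [scalHom_mk] <;> simp only [← hX, ← hY, ← hZ] <;>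
        simp only [hr₂, Matrix.cons_val_zero, Matrix.cons_val_one, Matrix.head_cons,
          Matrix.cons_val_two, Matrix.tail_cons] <;>
        simp [mul_assoc, pow_two, sub_mul, mul_sub, hYX, hZY, hZX, hYX', hZY', hZX', smul_mul_assoc, mul_smul_comm, smul_smul, hii, neg_smul] <;>
        try module
    have main' : ∀ s, s * r₂ = r₂ * scalHom ![-1, -1, 1] s := by
      refine key_left r₂ _ ?_ ?_ ?_ <;>
        rw [scalHom_mk] <;> simp only [← hX, ← hY, ← hZ] <;>
        simp only [hr₂, Matrix.cons_val_zero, Matrix.cons_val_one, Matrix.head_cons,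
          Matrix.cons_val_two, Matrix.tail_cons] <;>
        simp [mul_assoc, pow_two, sub_mul, mul_sub, hYX, hZY, hZX, hYX', hZY', hZX', smul_mul_assoc, mul_smul_comm, smul_smul, hii, neg_smul] <;>
        try module
    intro s
    exact ⟨⟨scalHom ![-1, -1, 1] s, by rw [main s, sub_self]; exact TwoSidedIdeal.zero_mem _⟩,
      ⟨scalHom ![-1, -1, 1] s, by rw [main' s, sub_self]; exact TwoSidedIdeal.zero_mem _⟩⟩
  · -- r₃ = X² + Y²
    have main : ∀ s, r₃ * s = scalHom ![1, 1, -1] s * r₃ := by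
      refine key_right r₃ _ ?_ ?_ ?_ <;>
        rw [scalHom_mk] <;> simp only [← hX, ← hY, ← hZ] <;>
        simp only [hr₃, Matrix.cons_val_zero, Matrix.cons_val_one, Matrix.head_cons,
          Matrix.cons_val_two, Matrix.tail_cons] <;>
        simp [mul_assoc, pow_two, add_mul, mul_add, hYX, hZY, hZX, hYX', hZY', hZX', smul_mul_assoc, mul_smul_comm, smul_smul, hii, neg_smul] <;>
        try module
    have main' : ∀ s, s * r₃ = r₃ * scalHom ![1, 1, -1] s := by
      refine key_left r₃ _ ?_ ?_ ?_ <;>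
        rw [scalHom_mk] <;> simp only [← hX, ← hY, ← hZ] <;>
        simp only [hr₃, Matrix.cons_val_zero, Matrix.cons_val_one, Matrix.head_cons,
          Matrix.cons_val_two, Matrix.tail_cons] <;>
        simp [mul_assoc, pow_two, add_mul, mul_add, hYX, hZY, hZX, hYX', hZY', hZX', smul_mul_assoc, mul_smul_comm, smul_smul, hii, neg_smul] <;>
        try module
    intro s
    exact ⟨⟨scalHom ![1, 1, -1] s, by rw [main s, sub_self]; exact TwoSidedIdeal.zero_mem _⟩,
      ⟨scalHom ![1, 1, -1] s, by rw [main' s, sub_self]; exact TwoSidedIdeal.zero_mem _⟩⟩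
end
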